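/- arXiv:2206.10383 — 8 statements merged into one kernel-verified Lean document; each statement's English description precedes it below -/
import Mathlib

section
/- Let [x₁,y₁],...,[x_μ,y_μ] be the minimal co-occurrences of Q in S with y₁ < ... < y_μ, and set y_{μ+1} = n+1. For every index k with y_i ≤ k < y_{i+1}, the interval [x_i, k] is a left-minimal co-occurrence of Q in S. -/
open Finset

/-- `[i,j]` is a co-occurrence of `Q` in the length-`n` string `S` (1-indexed):
`1 ≤ i ≤ j ≤ n` and every character of `Q` occurs in `S[i..j]`. -/
def Cooc {α : Type*} (n : ℕ) (S : ℕ → α) (Q : Finset α) (i j : ℕ) : Prop :=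
  1 ≤ i ∧ i ≤ j ∧ j ≤ n ∧ ∀ c ∈ Q, ∃ k, i ≤ k ∧ k ≤ j ∧ S k = c

/-- `[i,j]` is a left-minimal co-occurrence: a co-occurrence such that `[i+1,j]` is not. -/
def LeftMinCooc {α : Type*} (n : ℕ) (S : ℕ → α) (Q : Finset α) (i j : ℕ) : Prop :=
  Cooc n S Q i j ∧ ¬ Cooc n S Q (i+1) j

/-- `[i,j]` is a minimal co-occurrence: a co-occurrence such that neither
`[i+1,j]` nor `[i,j-1]` is a co-occurrence. -/
def MinCooc {α : Type*} (n : ℕ) (S : ℕ → α) (Q : Finset α) (i j : ℕ) : Prop :=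
  Cooc n S Q i j ∧ ¬ Cooc n S Q (i+1) j ∧ ¬ Cooc n S Q i (j-1)

/-- `lmco n S Q w`: number of left-minimal co-occurrences of `Q` in `S` of length `w`. -/
noncomputable def lmco {α : Type*} (n : ℕ) (S : ℕ → α) (Q : Finset α) (w : ℕ) : ℕ :=
  {p : ℕ × ℕ | LeftMinCooc n S Q p.1 p.2 ∧ p.2 - p.1 + 1 = w}.ncard

/-- `dlt n S Q i = lmco(i) - lmco(i-1)` as an integer. -/
noncomputable def dlt {α : Type*} (n : ℕ) (S : ℕ → α) (Q : Finset α) (i : ℕ) : ℤ :=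
  (lmco n S Q i : ℤ) - (lmco n S Q (i-1) : ℤ)

/-- `coN n S Q w`: number of length-`w` co-occurrences of `Q` in `S`, i.e. the number of
windows `[k-w+1,k]` with `w ≤ k ≤ n` that are co-occurrences. -/
noncomputable def coN {α : Type*} (n : ℕ) (S : ℕ → α) (Q : Finset α) (w : ℕ) : ℕ :=
  {k : ℕ | w ≤ k ∧ k ≤ n ∧ Cooc n S Q (k - w + 1) k}.ncard

lemma Cooc.mono {α : Type*} {n : ℕ} {S : ℕ → α} {Q : Finset α} {i j i' j' : ℕ}
    (h : Cooc n S Q i j) (h1 : 1 ≤ i') (h2 : i' ≤ i) (h3 : j ≤ j') (h4 : j' ≤ n) :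
    Cooc n S Q i' j' := by
  obtain ⟨_, hij, _, hw⟩ := h
  refine ⟨h1, le_trans h2 (le_trans hij h3), h4, fun c hc => ?_⟩
  obtain ⟨m, hm1, hm2, hm3⟩ := hw c hc
  exact ⟨m, le_trans h2 hm1, le_trans hm2 h3, hm3⟩

lemma exists_min {α : Type*} {n : ℕ} {S : ℕ → α} {Q : Finset α} {a b : ℕ}
    (h : Cooc n S Q a b) : ∃ s t, MinCooc n S Q s t ∧ a ≤ s ∧ t ≤ b := by
  classical
  have hP : ∃ j, Cooc n S Q a j := ⟨b, h⟩
  set t := Nat.find hP with ht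
  have hct : Cooc n S Q a t := Nat.find_spec hP
  have htb : t ≤ b := Nat.find_le h
  have ht1 : 1 ≤ t := le_trans hct.1 hct.2.1
  have hnt : ¬ Cooc n S Q a (t-1) := by
    intro hc
    exact absurd (Nat.find_le hc) (by omega)
  set s := Nat.findGreatest (fun i => Cooc n S Q i t) t with hs
  have has : a ≤ s := Nat.le_findGreatest (P := fun i => Cooc n S Q i t) hct.2.1 hct
  have hcs : Cooc n S Q s t := Nat.findGreatest_spec (P := fun i => Cooc n S Q i t) hct.2.1 hct
  refine ⟨s, t, ⟨hcs, ?_, ?_⟩, has, htb⟩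
  · intro hc
    have h1 : s + 1 ≤ t := hc.2.1
    exact Nat.findGreatest_is_greatest (P := fun i => Cooc n S Q i t) (by omega) h1 hc
  · intro hc
    exact hnt (hc.mono hct.1 has le_rfl hc.2.2.1)

theorem stmt3 {α : Type*} (n : ℕ) (S : ℕ → α) (Q : Finset α) (hQ : 2 ≤ Q.card)
    (xi yi k : ℕ) (hi : MinCooc n S Q xi yi)
    (hk₁ : yi ≤ k) (hk₂ : k ≤ n)
    (hnext : ∀ s t : ℕ, MinCooc n S Q s t → t ≤ yi ∨ k < t) :
    LeftMinCooc n S Q xi k := by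
  obtain ⟨hco, hnl, hnr⟩ := hi
  refine ⟨hco.mono hco.1 le_rfl hk₁ hk₂, fun hc => ?_⟩
  obtain ⟨s, t, hm, hs, htk⟩ := exists_min hc
  have hty : yi < t := by
    by_contra hle
    push_neg at hle
    exact hnl (hm.1.mono (by omega) hs (by omega) hco.2.2.1)
  rcases hnext s t hm with h | h <;> omega
end

section
/- Let [x₁,y₁],...,[x_μ,y_μ] be the minimal co-occurrences of Q in S with y₁ < ... < y_μ, and set y_{μ+1} = n+1. For every index k with y_i ≤ k < y_{i+1}, the unique left-minimal co-occurrence of Q in S ending at k starts at x_i; in particular for each k ≥ y₁ there is exactly one left-minimal co-occurrence ending at k. -/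
open Finset

lemma cooc_mono {α : Type*} {n : ℕ} {S : ℕ → α} {Q : Finset α} {i j i' j' : ℕ}
    (h : Cooc n S Q i j) (hi1 : 1 ≤ i') (hii : i' ≤ i) (hjj : j ≤ j') (hjn : j' ≤ n) :
    Cooc n S Q i' j' := by
  obtain ⟨h1, h2, h3, h4⟩ := h
  refine ⟨hi1, le_trans hii (le_trans h2 hjj), hjn, fun c hc => ?_⟩
  obtain ⟨m, hm1, hm2, hm3⟩ := h4 c hc
  exact ⟨m, le_trans hii hm1, le_trans hm2 hjj, hm3⟩

theorem stmt4 {α : Type*} (n : ℕ) (S : ℕ → α) (Q : Finset α) (hQ : 2 ≤ Q.card)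
    (xi yi k : ℕ) (hi : MinCooc n S Q xi yi)
    (hk₁ : yi ≤ k) (hk₂ : k ≤ n)
    (hnext : ∀ s t : ℕ, MinCooc n S Q s t → t ≤ yi ∨ k < t) :
    LeftMinCooc n S Q xi k ∧ ∀ x' : ℕ, LeftMinCooc n S Q x' k → x' = xi := by
  classical
  have hcoocxik : Cooc n S Q xi k := cooc_mono hi.1 hi.1.1 le_rfl hk₁ hk₂
  have hnot : ¬ Cooc n S Q (xi+1) k := by
    intro hC
    have hex : ∃ t, Cooc n S Q (xi+1) t := ⟨k, hC⟩
    set t := Nat.find hex with ht_def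
    have ht : Cooc n S Q (xi+1) t := Nat.find_spec hex
    have htk : t ≤ k := Nat.find_le hC
    have ht1 : 1 ≤ t := le_trans ht.1 ht.2.1
    have htmin : ¬ Cooc n S Q (xi+1) (t-1) :=
      Nat.find_min hex (by omega)
    set s := Nat.findGreatest (fun s => Cooc n S Q s t) t with hs_def
    have hs : Cooc n S Q s t :=
      Nat.findGreatest_spec (P := fun s => Cooc n S Q s t) ht.2.1 ht
    have hsge : xi + 1 ≤ s :=
      Nat.le_findGreatest ht.2.1 ht
    have hsle : s ≤ t := Nat.findGreatest_le t
    have hns : ¬ Cooc n S Q (s+1) t := by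
      intro hC2
      rcases le_or_gt (s+1) t with h | h
      · exact absurd hC2 (Nat.findGreatest_is_greatest (P := fun s => Cooc n S Q s t) (by omega) h)
      · exact absurd hC2.2.1 (by omega)
    have hnt : ¬ Cooc n S Q s (t-1) := by
      intro hC2
      exact htmin (cooc_mono hC2 (by omega) hsge le_rfl (by omega))
    have hmin : MinCooc n S Q s t := ⟨hs, hns, hnt⟩
    rcases hnext s t hmin with h | h
    · exact hi.2.1 (cooc_mono hs (by omega) hsge h hi.1.2.2.1)
    · omega
  refine ⟨⟨hcoocxik, hnot⟩, fun x' hx' => ?_⟩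
  rcases lt_trichotomy x' xi with h | h | h
  · exact absurd (cooc_mono hcoocxik (by omega) (by omega) le_rfl hk₂) hx'.2
  · exact h
  · exact absurd (cooc_mono hx'.1 (by omega) (by omega) le_rfl hk₂) hnot
end

section
/- For every index k ∈ [1,n], the number of minimal co-occurrences [x,y] of Q in S with x ≤ k ≤ y is at most q = |Q|. -/
open Finset

theorem stmt5 {α : Type*} (n : ℕ) (S : ℕ → α) (Q : Finset α) (hQ : 2 ≤ Q.card)
    (k : ℕ) (hk₁ : 1 ≤ k) (hk₂ : k ≤ n) :
    {p : ℕ × ℕ | MinCooc n S Q p.1 p.2 ∧ p.1 ≤ k ∧ k ≤ p.2}.ncard ≤ Q.card := by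
  -- key: for a minimal cooc [x,y] with |Q| ≥ 2, S x ∈ Q and S x occurs only at x in [x,y]
  have key : ∀ x y : ℕ, MinCooc n S Q x y →
      S x ∈ Q ∧ ∀ m, x < m → m ≤ y → S m ≠ S x := by
    intro x y ⟨hc, hnc, _⟩
    obtain ⟨hx1, hxy, hyn, hall⟩ := hc
    have hlt : x < y := by
      rcases lt_or_eq_of_le hxy with h | h
      · exact h
      · exfalso
        subst h
        have : Q ⊆ {S x} := by
          intro c hcQ
          obtain ⟨m, hm1, hm2, hm3⟩ := hall c hcQ
          have : m = x := le_antisymm hm2 hm1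
          simp [← this, hm3]
        have := Finset.card_le_card this
        simp at this
        omega
    have h1 : ¬ (∀ c ∈ Q, ∃ m, x+1 ≤ m ∧ m ≤ y ∧ S m = c) := by
      intro h
      exact hnc ⟨by omega, by omega, hyn, h⟩
    push_neg at h1
    obtain ⟨c, hcQ, hc2⟩ := h1
    obtain ⟨m, hm1, hm2, hm3⟩ := hall c hcQ
    have hmx : m = x := by
      by_contra h
      exact hc2 m (by omega) hm2 hm3
    subst hmx
    subst hm3
    refine ⟨hcQ, fun m hxm hmy hS => hc2 m (by omega) hmy hS⟩
  apply le_trans (Set.ncard_le_ncard_of_injOn (fun p => S p.1) ?_ ?_ Q.finite_toSet)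
  · simp [Set.ncard_coe_finset]
  · rintro ⟨x, y⟩ ⟨hm, _, _⟩
    exact (key x y hm).1
  · rintro ⟨x1, y1⟩ ⟨hm1, hx1k, hky1⟩ ⟨x2, y2⟩ ⟨hm2, hx2k, hky2⟩ heq
    simp only at heq
    have hx : x1 = x2 := by
      rcases lt_trichotomy x1 x2 with h | h | h
      · exact absurd heq.symm ((key x1 y1 hm1).2 x2 h (by omega))
      · exact h
      · exact absurd heq ((key x2 y2 hm2).2 x1 h (by omega))
    subst hx
    have hy : y1 = y2 := by
      have sub : ∀ a b : ℕ, MinCooc n S Q x1 a → Cooc n S Q x1 b → b < a → False := by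
        intro a b ⟨⟨_, _, han, _⟩, _, hna⟩ ⟨hb1, hb2, _, hball⟩ hba
        apply hna
        refine ⟨hb1, by omega, by omega, fun c hc => ?_⟩
        obtain ⟨m, h1, h2, h3⟩ := hball c hc
        exact ⟨m, h1, by omega, h3⟩
      rcases lt_trichotomy y1 y2 with h | h | h
      · exact absurd (sub y2 y1 hm2 hm1.1 h) not_false
      · exact h
      · exact absurd (sub y1 y2 hm1 hm2.1 h) not_false
    simp [hy]
end

section
/- The sum of the lengths of all minimal co-occurrences of Q in S is at most n·q, where length of [i,j] is j−i+1. -/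
open Finset

/-!
Every minimal co-occurrence `[i,j]` starts with a character `S i ∈ Q` that does not occur again
in `S[i+1..j]`, and it is determined by its left end. Hence two distinct minimal co-occurrences
containing a common position `k` start with distinct characters of `Q`, so every position is
covered by at most `q` of them; summing the lengths counts each position once per covering
interval, which gives at most `n * q`.
-/

section

variable {α : Type*} {n : ℕ} {S : ℕ → α} {Q : Finset α} {i j j' : ℕ}

theorem Cooc.mono_right (h : Cooc n S Q i j) (hj : j ≤ j') (hn : j' ≤ n) :
    Cooc n S Q i j' := by
  obtain ⟨hi, hij, -, hcov⟩ := h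
  refine ⟨hi, hij.trans hj, hn, fun c hc => ?_⟩
  obtain ⟨k, hik, hkj, hk⟩ := hcov c hc
  exact ⟨k, hik, hkj.trans hj, hk⟩

theorem LeftMinCooc.apply_left_mem_and_ne (hQ : Q.Nonempty) (h : LeftMinCooc n S Q i j) :
    S i ∈ Q ∧ ∀ k, i < k → k ≤ j → S k ≠ S i := by
  obtain ⟨⟨hi, hij, hjn, hcov⟩, hnot⟩ := h
  rcases hij.lt_or_eq with hlt | rfl
  · simp only [Cooc, not_and, not_forall, not_exists] at hnot
    obtain ⟨c, hc, hmiss⟩ := hnot (by omega) hlt hjn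
    obtain ⟨k, hik, hkj, rfl⟩ := hcov c hc
    obtain rfl : k = i := by
      by_contra hne
      exact hmiss k (by omega) hkj rfl
    exact ⟨hc, hmiss⟩
  · obtain ⟨c, hc⟩ := hQ
    obtain ⟨k, hik, hki, rfl⟩ := hcov c hc
    obtain rfl : k = i := le_antisymm hki hik
    exact ⟨hc, fun m him hmi => absurd him (by omega)⟩

theorem MinCooc.leftMinCooc (h : MinCooc n S Q i j) : LeftMinCooc n S Q i j :=
  ⟨h.1, h.2.1⟩

theorem MinCooc.le_of_cooc (h : MinCooc n S Q i j) (h' : Cooc n S Q i j') : j ≤ j' := by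
  by_contra! hlt
  have hjn := h.1.2.2.1
  exact h.2.2 (h'.mono_right (by omega) (by omega))

theorem MinCooc.right_unique (h : MinCooc n S Q i j) (h' : MinCooc n S Q i j') : j = j' :=
  le_antisymm (h.le_of_cooc h'.1) (h'.le_of_cooc h.1)

theorem MinCooc.injOn_apply_fst (hQ : Q.Nonempty) (k : ℕ) :
    Set.InjOn (fun p : ℕ × ℕ => S p.1)
      {p | MinCooc n S Q p.1 p.2 ∧ p.1 ≤ k ∧ k ≤ p.2} := by
  rintro ⟨i, j⟩ ⟨hp, hik, hkj⟩ ⟨i', j'⟩ ⟨hp', hik', hkj'⟩ (hS : S i = S i')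
  have hne := (hp.leftMinCooc.apply_left_mem_and_ne hQ).2
  have hne' := (hp'.leftMinCooc.apply_left_mem_and_ne hQ).2
  obtain rfl : i = i' := by
    rcases lt_trichotomy i i' with hlt | rfl | hgt
    · exact absurd hS.symm (hne i' hlt (hik'.trans hkj))
    · rfl
    · exact absurd hS (hne' i hgt (hik.trans hkj'))
  exact Prod.ext rfl (hp.right_unique hp')

theorem card_filter_minCooc_mem_le (hQ : Q.Nonempty) {M : Finset (ℕ × ℕ)}
    (hM : ∀ p ∈ M, MinCooc n S Q p.1 p.2) (k : ℕ) :
    #{p ∈ M | p.1 ≤ k ∧ k ≤ p.2} ≤ #Q := by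
  refine card_le_card_of_injOn (fun p => S p.1) (fun p hp => ?_)
    ((MinCooc.injOn_apply_fst (n := n) hQ k).mono fun p hp => ?_)
  · rw [mem_coe, mem_filter] at hp
    exact ((hM p hp.1).leftMinCooc.apply_left_mem_and_ne hQ).1
  · rw [coe_filter] at hp
    exact ⟨hM p hp.1, hp.2⟩

end

theorem sum_interval_length_le_mul {M : Finset (ℕ × ℕ)} {n q : ℕ}
    (hM : ∀ p ∈ M, 1 ≤ p.1 ∧ p.1 ≤ p.2 ∧ p.2 ≤ n)
    (hcover : ∀ k ∈ Icc 1 n, #{p ∈ M | p.1 ≤ k ∧ k ≤ p.2} ≤ q) :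
    ∑ p ∈ M, (p.2 - p.1 + 1) ≤ n * q :=
  calc ∑ p ∈ M, (p.2 - p.1 + 1)
      = ∑ p ∈ M, #((Icc 1 n).bipartiteAbove (fun p k => p.1 ≤ k ∧ k ≤ p.2) p) := by
        refine sum_congr rfl fun p hp => ?_
        have hp := hM p hp
        have hcover :
            (Icc 1 n).bipartiteAbove (fun p k => p.1 ≤ k ∧ k ≤ p.2) p = Icc p.1 p.2 := by
          ext k
          simp only [bipartiteAbove, mem_filter, mem_Icc]
          omega
        rw [hcover, Nat.card_Icc]
        omega
    _ = ∑ k ∈ Icc 1 n, #(M.bipartiteBelow (fun p k => p.1 ≤ k ∧ k ≤ p.2) k) :=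
        sum_card_bipartiteAbove_eq_sum_card_bipartiteBelow _
    _ ≤ ∑ _k ∈ Icc 1 n, q := sum_le_sum hcover
    _ = n * q := by simp

theorem stmt6 {α : Type*} (n : ℕ) (S : ℕ → α) (Q : Finset α) (hQ : 2 ≤ Q.card)
    (M : Finset (ℕ × ℕ)) (hM : ∀ p : ℕ × ℕ, p ∈ M ↔ MinCooc n S Q p.1 p.2) :
    ∑ p ∈ M, (p.2 - p.1 + 1) ≤ n * Q.card := by
  have hQne : Q.Nonempty := card_pos.1 (by omega)
  have hmin : ∀ p ∈ M, MinCooc n S Q p.1 p.2 := fun p hp => (hM p).1 hp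
  refine sum_interval_length_le_mul (fun p hp => ?_) fun k _ =>
    card_filter_minCooc_mem_le hQne hmin k
  obtain ⟨⟨h1, h2, h3, -⟩, -⟩ := hmin p hp
  exact ⟨h1, h2, h3⟩
end

section
/- Let [x₁,y₁],...,[x_μ,y_μ] be the minimal co-occurrences of Q in S with y₁ < ... < y_μ and y_{μ+1} = n+1, and let len(i,j) = j−i+1. Then for each w ∈ [2,n], lmco(w) equals the number of indices i ∈ [1,μ] such that len(x_i,y_i) ≤ w < len(x_i,y_{i+1}). -/
open Finset

section Aux

variable {α : Type*} {n : ℕ} {S : ℕ → α} {Q : Finset α}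

lemma cooc_mono_s10 {i j i' j' : ℕ} (h : Cooc n S Q i j)
    (h1 : 1 ≤ i') (h2 : i' ≤ i) (h3 : j ≤ j') (h4 : j' ≤ n) :
    Cooc n S Q i' j' :=
  ⟨h1, le_trans h2 (le_trans h.2.1 h3), h4, fun c hc => by
    obtain ⟨k, hk1, hk2, hk3⟩ := h.2.2.2 c hc
    exact ⟨k, le_trans h2 hk1, le_trans hk2 h3, hk3⟩⟩

lemma min_lt_lt {s t s' t' : ℕ} (h1 : MinCooc n S Q s t) (h2 : MinCooc n S Q s' t')
    (h : s < s') : t < t' := by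
  by_contra hc
  push_neg at hc
  exact h1.2.1 (cooc_mono_s10 h2.1 (by omega) h hc h1.1.2.2.1)

lemma min_y_eq {s t t' : ℕ} (h1 : MinCooc n S Q s t) (h2 : MinCooc n S Q s t') : t = t' := by
  have ha : t' ≤ n := h2.1.2.2.1
  have hb : t ≤ n := h1.1.2.2.1
  have hst : s ≤ t := h1.1.2.1
  have hst' : s ≤ t' := h2.1.2.1
  have hs1 : 1 ≤ s := h1.1.1
  rcases lt_trichotomy t t' with h | h | h
  · exact absurd (cooc_mono_s10 h1.1 hs1 le_rfl (by omega) (by omega)) h2.2.2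
  · exact h
  · exact absurd (cooc_mono_s10 h2.1 hs1 le_rfl (by omega) (by omega)) h1.2.2

lemma min_shrink {a j : ℕ} (h : LeftMinCooc n S Q a j) :
    ∃ t, t ≤ j ∧ MinCooc n S Q a t := by
  classical
  have hne : ∃ t, Cooc n S Q a t := ⟨j, h.1⟩
  have hle : Nat.find hne ≤ j := Nat.find_min' hne h.1
  have hspec := Nat.find_spec hne
  have ha1 : 1 ≤ a := hspec.1
  have hat : a ≤ Nat.find hne := hspec.2.1
  refine ⟨Nat.find hne, hle, hspec, ?_, Nat.find_min hne (by omega)⟩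
  intro hc
  exact h.2 (cooc_mono_s10 hc (by omega) le_rfl hle h.1.2.2.1)

lemma leftmin_mem {μ : ℕ} {x y : ℕ → ℕ}
    (hmin : ∀ i ∈ Finset.Icc 1 μ, MinCooc n S Q (x i) (y i))
    (hall : ∀ s t : ℕ, MinCooc n S Q s t → ∃ i ∈ Finset.Icc 1 μ, x i = s ∧ y i = t)
    (hmono : ∀ i ∈ Finset.Icc 1 μ, ∀ j ∈ Finset.Icc 1 μ, i < j → y i < y j)
    {i j : ℕ} (hi : i ∈ Finset.Icc 1 μ) (h1 : y i ≤ j) (h2 : j < y (i+1)) (h3 : j ≤ n) :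
    LeftMinCooc n S Q (x i) j := by
  classical
  have hm := hmin i hi
  refine ⟨cooc_mono_s10 hm.1 hm.1.1 le_rfl h1 h3, ?_⟩
  intro hcon
  set a := Nat.findGreatest (fun a => Cooc n S Q a j) j with ha
  have hxj : x i + 1 ≤ j := hcon.2.1
  have haP : Cooc n S Q a j :=
    Nat.findGreatest_spec (P := fun a => Cooc n S Q a j) hxj hcon
  have hax : x i + 1 ≤ a :=
    Nat.le_findGreatest (P := fun a => Cooc n S Q a j) hxj hcon
  have hlm : LeftMinCooc n S Q a j :=
    ⟨haP, fun hc =>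
      Nat.findGreatest_is_greatest (P := fun a => Cooc n S Q a j)
        (Nat.lt_succ_self a) hc.2.1 hc⟩
  obtain ⟨t, htj, hmt⟩ := min_shrink hlm
  obtain ⟨k, hk, hxk, hyk⟩ := hall a t hmt
  have hmk := hmin k hk
  have h5 : y i < y k := by
    refine min_lt_lt hm hmk ?_
    omega
  have hkμ : k ≤ μ := (Finset.mem_Icc.mp hk).2
  have hik : i + 1 ≤ k := by
    by_contra hc
    push_neg at hc
    rcases eq_or_lt_of_le (Nat.lt_succ_iff.mp hc) with he | hlt
    · rw [he] at h5; omega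
    · exact absurd (hmono k hk i hi hlt) (by omega)
  have h6 : y (i+1) ≤ y k := by
    rcases eq_or_lt_of_le hik with he | hlt
    · exact le_of_eq (congrArg y he)
    · exact le_of_lt (hmono (i+1) (Finset.mem_Icc.mpr ⟨by omega, by omega⟩) k hk hlt)
  omega

end Aux

theorem stmt10 {α : Type*} (n : ℕ) (S : ℕ → α) (Q : Finset α) (hQ : 2 ≤ Q.card)
    (μ : ℕ) (x y : ℕ → ℕ)
    (hmin : ∀ i ∈ Finset.Icc 1 μ, MinCooc n S Q (x i) (y i))
    (hall : ∀ s t : ℕ, MinCooc n S Q s t → ∃ i ∈ Finset.Icc 1 μ, x i = s ∧ y i = t)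
    (hmono : ∀ i ∈ Finset.Icc 1 μ, ∀ j ∈ Finset.Icc 1 μ, i < j → y i < y j)
    (hlast : y (μ + 1) = n + 1)
    (w : ℕ) (hw₁ : 2 ≤ w) (hw₂ : w ≤ n) :
    lmco n S Q w =
      ((Finset.Icc 1 μ).filter
        (fun i => y i - x i + 1 ≤ w ∧ w < y (i+1) - x i + 1)).card := by
  classical
  set T := (Finset.Icc 1 μ).filter
      (fun i => y i - x i + 1 ≤ w ∧ w < y (i+1) - x i + 1) with hT
  have hset : {p : ℕ × ℕ | LeftMinCooc n S Q p.1 p.2 ∧ p.2 - p.1 + 1 = w}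
      = ↑(T.image (fun i => (x i, x i + w - 1))) := by
    ext ⟨p1, p2⟩
    simp only [Set.mem_setOf_eq, Finset.coe_image, Set.mem_image, Finset.mem_coe,
      Finset.mem_filter, Finset.mem_Icc, hT]
    constructor
    · rintro ⟨hlm, hlen⟩
      obtain ⟨t, htp, hmt⟩ := min_shrink hlm
      obtain ⟨k, hk, hxk, hyk⟩ := hall p1 t hmt
      have hp1 : 1 ≤ p1 := hlm.1.1
      have hp12 : p1 ≤ p2 := hlm.1.2.1
      have hp2n : p2 ≤ n := hlm.1.2.2.1
      have hpt : p1 ≤ t := hmt.1.2.1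
      have hkey : p2 < y (k+1) := by
        by_contra hcon
        push_neg at hcon
        have hkμ : k ≤ μ := (Finset.mem_Icc.mp hk).2
        rcases eq_or_lt_of_le hkμ with he | hlt
        · rw [he, hlast] at hcon; omega
        · have hk1 : k+1 ∈ Finset.Icc 1 μ := Finset.mem_Icc.mpr ⟨by omega, hlt⟩
          have hm1 := hmin (k+1) hk1
          have hmk := hmin k hk
          have hyy : y k < y (k+1) := hmono k hk (k+1) hk1 (by omega)
          have hy1n : y (k+1) ≤ n := hm1.1.2.2.1
          have hykk : x k ≤ y k := hmk.1.2.1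
          have hxx : x k < x (k+1) := by
            by_contra hc2
            push_neg at hc2
            exact hm1.2.2 (cooc_mono_s10 hmk.1 hm1.1.1 hc2 (by omega) (by omega))
          exact hlm.2 (cooc_mono_s10 hm1.1 (by omega) (by omega) hcon hp2n)
      exact ⟨k, ⟨⟨(Finset.mem_Icc.mp hk).1, (Finset.mem_Icc.mp hk).2⟩, by omega, by omega⟩,
        by rw [Prod.mk.injEq]; exact ⟨hxk, by omega⟩⟩
    · rintro ⟨k, ⟨⟨hk1, hk2⟩, hc1, hc2⟩, heq⟩
      have hk : k ∈ Finset.Icc 1 μ := Finset.mem_Icc.mpr ⟨hk1, hk2⟩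
      have hmk := hmin k hk
      have hx1 : 1 ≤ x k := hmk.1.1
      have hxy : x k ≤ y k := hmk.1.2.1
      have hyn : y k ≤ n := hmk.1.2.2.1
      have hj1 : y k ≤ x k + w - 1 := by omega
      have hj2 : x k + w - 1 < y (k+1) := by omega
      have hjn : x k + w - 1 ≤ n := by
        rcases eq_or_lt_of_le hk2 with he | hlt
        · subst he; rw [hlast] at hj2; omega
        · have := (hmin (k+1) (Finset.mem_Icc.mpr ⟨by omega, hlt⟩)).1.2.2.1
          omega
      have hlm := leftmin_mem hmin hall hmono hk hj1 hj2 hjn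
      rw [Prod.mk.injEq] at heq
      obtain ⟨he1, he2⟩ := heq
      rw [← he1, ← he2]
      exact ⟨hlm, by omega⟩
  rw [lmco, hset, Set.ncard_coe_finset, Finset.card_image_of_injOn]
  intro i hi j hj heq
  rw [Prod.mk.injEq] at heq
  have hi' := Finset.mem_filter.mp hi
  have hj' := Finset.mem_filter.mp hj
  have hxij : x i = x j := heq.1
  have hy : y i = y j := min_y_eq (hmin i hi'.1) (hxij ▸ hmin j hj'.1)
  rcases lt_trichotomy i j with h | h | h
  · exact absurd (hmono i hi'.1 j hj'.1 h) (by omega)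
  · exact h
  · exact absurd (hmono j hj'.1 i hi'.1 h) (by omega)
end

section
/- Let δ(i) = lmco(i) − lmco(i−1) for i ∈ [2,n]. Then δ(w) = ∑_{i=1}^{μ} ( [len(x_i,y_i) = w] − [len(x_i,y_{i+1}) = w] ), where [x₁,y₁],...,[x_μ,y_μ] are the minimal co-occurrences of Q in S ordered by right endpoint, y_{μ+1} = n+1, and len(i,j) = j−i+1. -/
open Finset

section Aux

variable {α : Type*} {n : ℕ} {S : ℕ → α} {Q : Finset α}

lemma cooc_ext {i j j' : ℕ} (h : Cooc n S Q i j) (h1 : j ≤ j') (h2 : j' ≤ n) :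
    Cooc n S Q i j' :=
  ⟨h.1, h.2.1.trans h1, h2, fun c hc => by
    obtain ⟨k, hk1, hk2, hk3⟩ := h.2.2.2 c hc
    exact ⟨k, hk1, hk2.trans h1, hk3⟩⟩

lemma cooc_wk {i i' j : ℕ} (h : Cooc n S Q i j) (h1 : i' ≤ i) (h2 : 1 ≤ i') :
    Cooc n S Q i' j :=
  ⟨h2, h1.trans h.2.1, h.2.2.1, fun c hc => by
    obtain ⟨k, hk1, hk2, hk3⟩ := h.2.2.2 c hc
    exact ⟨k, h1.trans hk1, hk2, hk3⟩⟩

lemma exists_minCooc {a b : ℕ} (h : Cooc n S Q a b) :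
    ∃ s t, a ≤ s ∧ t ≤ b ∧ MinCooc n S Q s t := by
  classical
  have hex : ∃ t, Cooc n S Q a t := ⟨b, h⟩
  set t' := Nat.find hex with ht'
  have hct : Cooc n S Q a t' := Nat.find_spec hex
  have htb : t' ≤ b := Nat.find_le h
  have h1a : 1 ≤ a := hct.1
  have hat : a ≤ t' := hct.2.1
  have hnot : ¬ Cooc n S Q a (t' - 1) := by
    intro hc
    exact Nat.find_min hex (by omega) hc
  set s' := Nat.findGreatest (fun s => Cooc n S Q s t') t' with hs'
  have hcs : Cooc n S Q s' t' :=
    Nat.findGreatest_spec (P := fun s => Cooc n S Q s t') hat hct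
  have has : a ≤ s' :=
    Nat.le_findGreatest (P := fun s => Cooc n S Q s t') hat hct
  refine ⟨s', t', has, htb, hcs, ?_, ?_⟩
  · intro hc
    rcases le_or_gt (s' + 1) t' with hle | hlt
    · exact Nat.findGreatest_is_greatest (P := fun s => Cooc n S Q s t')
        (lt_add_one s') hle hc
    · have := hc.2.1
      omega
  · intro hc
    exact hnot (cooc_wk hc has h1a)

end Aux

theorem stmt11 {α : Type*} (n : ℕ) (S : ℕ → α) (Q : Finset α) (hQ : 2 ≤ Q.card)
    (μ : ℕ) (x y : ℕ → ℕ)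
    (hmin : ∀ i ∈ Finset.Icc 1 μ, MinCooc n S Q (x i) (y i))
    (hall : ∀ s t : ℕ, MinCooc n S Q s t → ∃ i ∈ Finset.Icc 1 μ, x i = s ∧ y i = t)
    (hmono : ∀ i ∈ Finset.Icc 1 μ, ∀ j ∈ Finset.Icc 1 μ, i < j → y i < y j)
    (hlast : y (μ + 1) = n + 1)
    (w : ℕ) (hw₁ : 2 ≤ w) (hw₂ : w ≤ n) :
    dlt n S Q w =
      ∑ i ∈ Finset.Icc 1 μ,
        ((if y i - x i + 1 = w then (1 : ℤ) else 0) -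
         (if y (i+1) - x i + 1 = w then (1 : ℤ) else 0)) := by
  classical
  -- x is strictly increasing on [1, μ]
  have hxmono : ∀ i ∈ Finset.Icc 1 μ, ∀ j ∈ Finset.Icc 1 μ, i < j → x i < x j := by
    intro i hi j hj hij
    by_contra hle
    push_neg at hle
    have hmi := hmin i hi
    have hmj := hmin j hj
    have hyy : y i < y j := hmono i hi j hj hij
    have hc1 : Cooc n S Q (x i) (y j - 1) :=
      cooc_ext hmi.1 (by omega) (by have := hmj.1.2.2.1; omega)
    exact hmj.2.2 (cooc_wk hc1 hle hmj.1.1)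
  -- key characterization of left-minimal co-occurrences of length v
  have key : ∀ v : ℕ, 1 ≤ v → ∀ s t : ℕ,
      (LeftMinCooc n S Q s t ∧ t - s + 1 = v) ↔
      ∃ i, (i ∈ Finset.Icc 1 μ ∧ (y i ≤ x i + (v - 1) ∧ x i + v ≤ y (i + 1))) ∧
        x i = s ∧ x i + (v - 1) = t := by
    intro v hv s t
    constructor
    · rintro ⟨⟨hc, hnc⟩, hlen⟩
      have hst : s ≤ t := hc.2.1
      have h1s : 1 ≤ s := hc.1
      have htn : t ≤ n := hc.2.2.1
      obtain ⟨s', t', hs', ht', hm⟩ := exists_minCooc hc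
      have hss : s' = s := by
        by_contra hne
        have : s + 1 ≤ s' := by omega
        exact hnc (cooc_ext (cooc_wk hm.1 this (by omega)) ht' htn)
      obtain ⟨i, hi, hxi, hyi⟩ := hall s' t' hm
      have hiIcc := Finset.mem_Icc.mp hi
      have hteq : t = s + (v - 1) := by omega
      refine ⟨i, ⟨hi, ?_, ?_⟩, by omega, by omega⟩
      · omega
      · -- t < y (i+1)
        rcases eq_or_lt_of_le hiIcc.2 with hiμ | hiμ
        · subst hiμ; rw [hlast]; omega
        · have hi1 : i + 1 ∈ Finset.Icc 1 μ := Finset.mem_Icc.mpr ⟨by omega, by omega⟩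
          have hm1 := hmin (i + 1) hi1
          have hx1 : x i < x (i + 1) := hxmono i hi (i + 1) hi1 (lt_add_one i)
          by_contra hcon
          push_neg at hcon
          have hy1t : y (i + 1) ≤ t := by omega
          have : Cooc n S Q (s + 1) t :=
            cooc_ext (cooc_wk hm1.1 (by omega) (by omega)) hy1t htn
          exact hnc this
    · rintro ⟨i, ⟨hi, hc1, hc2⟩, hxs, hxt⟩
      have hmi := hmin i hi
      have hiIcc := Finset.mem_Icc.mp hi
      have h1x : 1 ≤ x i := hmi.1.1
      have hxy : x i ≤ y i := hmi.1.2.1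
      have hyn : y i ≤ n := hmi.1.2.2.1
      have htn : t ≤ n := by
        rcases eq_or_lt_of_le hiIcc.2 with hiμ | hiμ
        · subst hiμ; rw [hlast] at hc2; omega
        · have hi1 : i + 1 ∈ Finset.Icc 1 μ := Finset.mem_Icc.mpr ⟨by omega, by omega⟩
          have := (hmin (i + 1) hi1).1.2.2.1
          omega
      have hc : Cooc n S Q s t := by
        subst hxs; exact cooc_ext hmi.1 (by omega) htn
      refine ⟨⟨hc, ?_⟩, by omega⟩
      intro hcc
      obtain ⟨s', t', hs', ht', hm⟩ := exists_minCooc hcc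
      obtain ⟨k, hk, hxk, hyk⟩ := hall s' t' hm
      have hkIcc := Finset.mem_Icc.mp hk
      have hik : i < k := by
        by_contra hge
        push_neg at hge
        rcases eq_or_lt_of_le hge with heq | hlt
        · subst heq; omega
        · have := hxmono k hk i hi hlt; omega
      have hi1 : i + 1 ∈ Finset.Icc 1 μ := Finset.mem_Icc.mpr ⟨by omega, by omega⟩
      have hy1k : y (i + 1) ≤ y k := by
        rcases eq_or_lt_of_le (show i + 1 ≤ k by omega) with heq | hlt
        · rw [heq]
        · exact le_of_lt (hmono (i + 1) hi1 k hk hlt)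
      omega
  -- count left-minimal co-occurrences of length v
  have hlm : ∀ v : ℕ, 1 ≤ v → lmco n S Q v =
      ((Finset.Icc 1 μ).filter
        (fun i => y i ≤ x i + (v - 1) ∧ x i + v ≤ y (i + 1))).card := by
    intro v hv
    have hset : {p : ℕ × ℕ | LeftMinCooc n S Q p.1 p.2 ∧ p.2 - p.1 + 1 = v} =
        ↑(((Finset.Icc 1 μ).filter
            (fun i => y i ≤ x i + (v - 1) ∧ x i + v ≤ y (i + 1))).image
          (fun i => (x i, x i + (v - 1)))) := by
      ext ⟨s, t⟩
      simp only [Set.mem_setOf_eq, Finset.coe_image, Set.mem_image, Finset.mem_coe,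
        Finset.mem_filter, Prod.mk.injEq]
      rw [key v hv s t]
    rw [lmco, hset, Set.ncard_coe_finset]
    apply Finset.card_image_of_injOn
    intro i hi j hj hij
    simp only [Finset.coe_filter, Set.mem_setOf_eq] at hi hj
    have hxij : x i = x j := congrArg Prod.fst hij
    by_contra hne
    rcases lt_or_gt_of_ne hne with h | h
    · have := hxmono i hi.1 j hj.1 h; omega
    · have := hxmono j hj.1 i hi.1 h; omega
  have e1 := hlm w (by omega)
  have e2 := hlm (w - 1) (by omega)
  rw [dlt, e1, e2, Finset.card_filter, Finset.card_filter]
  push_cast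
  rw [← Finset.sum_sub_distrib]
  apply Finset.sum_congr rfl
  intro i hi
  have hmi := hmin i hi
  have hiIcc := Finset.mem_Icc.mp hi
  have h1x : 1 ≤ x i := hmi.1.1
  have hxy : x i ≤ y i := hmi.1.2.1
  have hyn : y i ≤ n := hmi.1.2.2.1
  have hyy : y i < y (i + 1) := by
    rcases eq_or_lt_of_le hiIcc.2 with hiμ | hiμ
    · subst hiμ; rw [hlast]; omega
    · exact hmono i hi (i + 1) (Finset.mem_Icc.mpr ⟨by omega, by omega⟩) (lt_add_one i)
  split_ifs <;> omega
end

section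
/- Let co(w) be the number of length-w co-occurrences of Q in S and lmco(w) the number of length-w left-minimal co-occurrences. Let y₁ be the smallest right endpoint of a minimal co-occurrence (assuming one exists). Then for all w, co(w) = (∑_{i=2}^{w} lmco(i)) − max(w − y₁, 0). -/
/-!
Every co-occurrence ending at `k` extends leftwards to a unique left-minimal one, `[lmStart k, k]`,
where `lmStart k` is the largest admissible left endpoint. So left-minimal co-occurrences
correspond to their right endpoints, which (given the minimal co-occurrence with least right
endpoint `y₁`) are exactly `y₁, …, n`; and the length-`w` window ending at `k ≥ w` is a
co-occurrence iff the left-minimal one ending at `k` has length at most `w`. Since these lengths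
are at least `2`, the sum `∑_{i=2}^{w} lmco(i)` counts the endpoints whose left-minimal
co-occurrence has length `≤ w`: the `co(w)` endpoints `k ≥ w`, plus the `max(w - y₁, 0)`
endpoints `y₁ ≤ k < w`, for which the length bound holds automatically.
-/

open Finset

namespace Cooc

variable {α : Type*} {n : ℕ} {S : ℕ → α} {Q : Finset α} {i i' j j' : ℕ}

theorem mono_left (h : Cooc n S Q i j) (hi' : 1 ≤ i') (hle : i' ≤ i) : Cooc n S Q i' j := by
  obtain ⟨-, hij, hjn, hQ⟩ := h
  refine ⟨hi', hle.trans hij, hjn, fun c hc => ?_⟩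
  obtain ⟨k, hik, hkj, hk⟩ := hQ c hc
  exact ⟨k, hle.trans hik, hkj, hk⟩

theorem mono_right_s13 (h : Cooc n S Q i j) (hle : j ≤ j') (hj' : j' ≤ n) : Cooc n S Q i j' := by
  obtain ⟨hi, hij, -, hQ⟩ := h
  refine ⟨hi, hij.trans hle, hj', fun c hc => ?_⟩
  obtain ⟨k, hik, hkj, hk⟩ := hQ c hc
  exact ⟨k, hik, hkj.trans hle, hk⟩

theorem lt_of_two_le_card (hQ : 2 ≤ Q.card) (h : Cooc n S Q i j) : i < j := by
  obtain ⟨a, ha, b, hb, hab⟩ := one_lt_card.mp hQ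
  obtain ⟨-, hij, -, hocc⟩ := h
  refine hij.lt_of_ne fun hij => hab ?_
  obtain ⟨k, hik, hkj, rfl⟩ := hocc a ha
  obtain ⟨l, hil, hlj, rfl⟩ := hocc b hb
  rw [show k = i by omega, show l = i by omega]

end Cooc

section LeftMinimal

variable {α : Type*} {n : ℕ} {S : ℕ → α} {Q : Finset α} {i k w : ℕ}

open Classical in
/-- The largest `i ≤ k` with `[i, k]` a co-occurrence; it is `0` (junk) when there is none. -/
noncomputable def lmStart (n : ℕ) (S : ℕ → α) (Q : Finset α) (k : ℕ) : ℕ :=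
  Nat.findGreatest (fun i => Cooc n S Q i k) k

noncomputable def lmLen (n : ℕ) (S : ℕ → α) (Q : Finset α) (k : ℕ) : ℕ :=
  k - lmStart n S Q k + 1

open Classical in
noncomputable def coocEnds (n : ℕ) (S : ℕ → α) (Q : Finset α) : Finset ℕ :=
  (range (n + 1)).filter fun k => ∃ i, Cooc n S Q i k

theorem mem_coocEnds : k ∈ coocEnds n S Q ↔ ∃ i, Cooc n S Q i k := by
  classical
  simp only [coocEnds, mem_filter, mem_range, and_iff_right_iff_imp]
  rintro ⟨i, h⟩
  exact Nat.lt_succ_of_le h.2.2.1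

theorem Cooc.le_lmStart (h : Cooc n S Q i k) : i ≤ lmStart n S Q k := by
  classical
  exact Nat.le_findGreatest h.2.1 h

theorem Cooc.cooc_lmStart (h : Cooc n S Q i k) : Cooc n S Q (lmStart n S Q k) k := by
  classical
  exact Nat.findGreatest_spec (P := fun i => Cooc n S Q i k) h.2.1 h

theorem not_cooc_lmStart_add_one : ¬ Cooc n S Q (lmStart n S Q k + 1) k := by
  classical
  intro h
  exact Nat.findGreatest_is_greatest (P := fun i => Cooc n S Q i k) (Nat.lt_succ_self _) h.2.1 h

theorem Cooc.leftMinCooc_lmStart (h : Cooc n S Q i k) : LeftMinCooc n S Q (lmStart n S Q k) k :=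
  ⟨h.cooc_lmStart, not_cooc_lmStart_add_one⟩

theorem LeftMinCooc.eq_lmStart (h : LeftMinCooc n S Q i k) : i = lmStart n S Q k := by
  refine h.1.le_lmStart.antisymm (not_lt.mp fun hlt => h.2 ?_)
  exact h.1.cooc_lmStart.mono_left (by omega) hlt

theorem leftMinCooc_iff : LeftMinCooc n S Q i k ↔ k ∈ coocEnds n S Q ∧ i = lmStart n S Q k := by
  refine ⟨fun h => ⟨mem_coocEnds.mpr ⟨i, h.1⟩, h.eq_lmStart⟩, ?_⟩
  rintro ⟨hk, rfl⟩
  obtain ⟨i', h⟩ := mem_coocEnds.mp hk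
  exact h.leftMinCooc_lmStart

theorem lmLen_le_self (hk : k ∈ coocEnds n S Q) : lmLen n S Q k ≤ k := by
  obtain ⟨i, h⟩ := mem_coocEnds.mp hk
  have := h.cooc_lmStart.1
  have := h.cooc_lmStart.2.1
  unfold lmLen
  omega

theorem two_le_lmLen (hQ : 2 ≤ Q.card) (hk : k ∈ coocEnds n S Q) : 2 ≤ lmLen n S Q k := by
  obtain ⟨i, h⟩ := mem_coocEnds.mp hk
  have := h.cooc_lmStart.lt_of_two_le_card hQ
  unfold lmLen
  omega

theorem cooc_window_iff (hwk : w ≤ k) :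
    Cooc n S Q (k - w + 1) k ↔ k ∈ coocEnds n S Q ∧ lmLen n S Q k ≤ w := by
  refine ⟨fun h => ⟨mem_coocEnds.mpr ⟨_, h⟩, ?_⟩, fun ⟨hk, hlen⟩ => ?_⟩
  · have := h.le_lmStart
    have := h.cooc_lmStart.2.1
    unfold lmLen
    omega
  · obtain ⟨i, h⟩ := mem_coocEnds.mp hk
    have := h.cooc_lmStart.2.1
    unfold lmLen at hlen
    exact h.cooc_lmStart.mono_left (by omega) (by omega)

theorem lmco_eq_card : lmco n S Q i = #((coocEnds n S Q).filter fun k => lmLen n S Q k = i) := by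
  have hset : {p : ℕ × ℕ | LeftMinCooc n S Q p.1 p.2 ∧ p.2 - p.1 + 1 = i} =
      ↑(((coocEnds n S Q).filter fun k => lmLen n S Q k = i).image
        fun k => (lmStart n S Q k, k)) := by
    ext ⟨a, k⟩
    simp only [Set.mem_ofPred_eq, leftMinCooc_iff, coe_image, Set.mem_image, mem_coe, mem_filter,
      Prod.mk.injEq]
    constructor
    · rintro ⟨⟨hk, rfl⟩, hlen⟩
      exact ⟨k, ⟨hk, hlen⟩, rfl, rfl⟩
    · rintro ⟨k, ⟨hk, hlen⟩, rfl, rfl⟩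
      exact ⟨⟨hk, rfl⟩, hlen⟩
  rw [lmco, hset, Set.ncard_coe_finset, card_image_of_injective _ fun _ _ h => congrArg Prod.snd h]

theorem coN_eq_card :
    coN n S Q w = #((coocEnds n S Q).filter fun k => w ≤ k ∧ lmLen n S Q k ≤ w) := by
  have hset : {k : ℕ | w ≤ k ∧ k ≤ n ∧ Cooc n S Q (k - w + 1) k} =
      ↑((coocEnds n S Q).filter fun k => w ≤ k ∧ lmLen n S Q k ≤ w) := by
    ext k
    simp only [Set.mem_ofPred_eq, coe_filter]
    constructor
    · rintro ⟨hwk, -, h⟩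
      exact ⟨((cooc_window_iff hwk).mp h).1, hwk, ((cooc_window_iff hwk).mp h).2⟩
    · rintro ⟨hk, hwk, hlen⟩
      obtain ⟨i, h⟩ := mem_coocEnds.mp hk
      exact ⟨hwk, h.2.2.1, (cooc_window_iff hwk).mpr ⟨hk, hlen⟩⟩
  rw [coN, hset, Set.ncard_coe_finset]

theorem sum_lmco_Icc (hQ : 2 ≤ Q.card) :
    ∑ i ∈ Icc 2 w, lmco n S Q i = #((coocEnds n S Q).filter fun k => lmLen n S Q k ≤ w) := by
  rw [card_eq_sum_card_fiberwise (f := lmLen n S Q) (t := Icc 2 w) fun k hk => ?_]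
  · refine sum_congr rfl fun i hi => ?_
    rw [lmco_eq_card, filter_filter]
    congr 1
    exact filter_congr fun k _ => ⟨fun h => ⟨h ▸ (mem_Icc.mp hi).2, h⟩, And.right⟩
  · obtain ⟨hk, hlen⟩ := mem_filter.mp hk
    exact mem_Icc.mpr ⟨two_le_lmLen hQ hk, hlen⟩

theorem card_filter_lmLen_le :
    #((coocEnds n S Q).filter fun k => lmLen n S Q k ≤ w) =
      coN n S Q w + #((coocEnds n S Q).filter fun k => k < w) := by
  rw [coN_eq_card, ← card_filter_add_card_filter_not (p := fun k => w ≤ k), filter_filter,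
    filter_filter]
  congr 2
  · ext k
    simp only [mem_filter]
    tauto
  · ext k
    simp only [mem_filter, not_le]
    exact ⟨fun ⟨hk, _, hkw⟩ => ⟨hk, hkw⟩,
      fun ⟨hk, hkw⟩ => ⟨hk, (lmLen_le_self hk).trans hkw.le, hkw⟩⟩

theorem Cooc.exists_minCooc_le (h : Cooc n S Q i k) : ∃ a b, MinCooc n S Q a b ∧ b ≤ k := by
  classical
  -- the witness is `[lmStart j, j]` for the least `j` such that `[i, j]` is a co-occurrence
  have hex : ∃ j, Cooc n S Q i j := ⟨k, h⟩
  have hj := Nat.find_spec hex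
  have hlt : Nat.find hex - 1 < Nat.find hex := by have := hj.1; have := hj.2.1; omega
  refine ⟨_, _, ⟨hj.cooc_lmStart, not_cooc_lmStart_add_one, fun h' => ?_⟩, Nat.find_min' hex h⟩
  exact Nat.find_min hex hlt (h'.mono_left hj.1 hj.le_lmStart)

theorem coocEnds_eq_Icc {x₁ y₁ : ℕ} (h₁ : MinCooc n S Q x₁ y₁)
    (hleast : ∀ x y : ℕ, MinCooc n S Q x y → y₁ ≤ y) :
    coocEnds n S Q = Icc y₁ n := by
  ext k
  rw [mem_coocEnds, mem_Icc]
  constructor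
  · rintro ⟨i, h⟩
    obtain ⟨a, b, hab, hbk⟩ := h.exists_minCooc_le
    exact ⟨(hleast a b hab).trans hbk, h.2.2.1⟩
  · exact fun ⟨hyk, hkn⟩ => ⟨x₁, h₁.1.mono_right_s13 hyk hkn⟩

end LeftMinimal

theorem stmt13_general {α : Type*} (n : ℕ) (S : ℕ → α) (Q : Finset α) (hQ : 2 ≤ Q.card)
    (x₁ y₁ : ℕ) (h₁ : MinCooc n S Q x₁ y₁)
    (hleast : ∀ x y : ℕ, MinCooc n S Q x y → y₁ ≤ y)
    (w : ℕ) (hw₂ : w ≤ n) :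
    (coN n S Q w : ℤ) =
      (∑ i ∈ Finset.Icc 2 w, (lmco n S Q i : ℤ)) - max ((w : ℤ) - y₁) 0 := by
  have hlow : (Icc y₁ n).filter (fun k => k < w) = Ico y₁ w := by
    ext k
    simp only [mem_filter, mem_Icc, mem_Ico]
    omega
  have hcount := card_filter_lmLen_le (n := n) (S := S) (Q := Q) (w := w)
  rw [← sum_lmco_Icc hQ, coocEnds_eq_Icc h₁ hleast, hlow, Nat.card_Ico] at hcount
  rw [← Nat.cast_sum, hcount]
  omega

theorem stmt13 {α : Type*} (n : ℕ) (S : ℕ → α) (Q : Finset α) (hQ : 2 ≤ Q.card)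
    (x₁ y₁ : ℕ) (h₁ : MinCooc n S Q x₁ y₁)
    (hleast : ∀ x y : ℕ, MinCooc n S Q x y → y₁ ≤ y)
    (w : ℕ) (hw₁ : 1 ≤ w) (hw₂ : w ≤ n) :
    (coN n S Q w : ℤ) =
      (∑ i ∈ Finset.Icc 2 w, (lmco n S Q i : ℤ)) - max ((w : ℤ) - y₁) 0 :=
  stmt13_general n S Q hQ x₁ y₁ h₁ hleast w hw₂
end

section
/- Fix u ≥ 2 and characters A, B, $ with Q = {A,B}. For i ∈ [2,u] let G_i be the string of length i+u consisting of A, then i−2 copies of $, then B, then u copies of $. Let S be a concatenation, for some E = {e₁ < e₂ < ... < e_m} ⊆ [2,u] and positive integers c₁,...,c_m, of c₁ copies of G_{e₁}, then c₂ copies of G_{e₂}, ..., then c_m copies of G_{e_m}. Then for every i ∈ [2,u], δ(i) = c_j if i = e_j for some j, and δ(i) = 0 if i ∈ [2,u] \ E, where δ(i) = lmco(i) − lmco(i−1). -/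
open Finset

/-- The increment gadget `G_i = A · $^{i-2} · B · $^{u}` (with `$` written `D`). -/
def Gadget {α : Type*} (A B D : α) (u i : ℕ) : List α :=
  A :: (List.replicate (i - 2) D ++ B :: List.replicate u D)

/-- Concatenation of `c 1` copies of `G_{e 1}`, then `c 2` copies of `G_{e 2}`, …,
then `c m` copies of `G_{e m}`. -/
def GadgetString {α : Type*} (A B D : α) (u m : ℕ) (e c : ℕ → ℕ) : List α :=
  ((List.range m).map (fun j => (List.replicate (c (j+1)) (Gadget A B D u (e (j+1)))).flatten)).flatten


/-!
A gadget `G_v` placed after position `s` has its `A` at position `s + 1` and its `B` at `s + v`,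
and is followed by `u` copies of `$`. A left-minimal co-occurrence starts at an `A` or a `B`.
For a length `w ≤ u`, one starting at a `B` cannot reach the next `A`, which is `u + 1` positions
further, and one starting at the `A` of `G_v` exists iff `v ≤ w`. Hence `lmco w` counts the
gadgets `G_v` with `v ≤ w`, and `δ(i)` is the number of copies of `G_i`.
-/

theorem LeftMinCooc.apply_left_mem {α : Type*} {n : ℕ} {S : ℕ → α} {Q : Finset α} {i j : ℕ}
    (h : LeftMinCooc n S Q i j) (hQ : Q.Nonempty) : S i ∈ Q := by
  obtain ⟨⟨hi1, hij, hjn, hall⟩, hnot⟩ := h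
  by_contra hi
  have mem_shift : ∀ c ∈ Q, ∃ k, i + 1 ≤ k ∧ k ≤ j ∧ S k = c := by
    intro c hc
    obtain ⟨k, hik, hkj, rfl⟩ := hall c hc
    exact ⟨k, Nat.lt_of_le_of_ne hik fun hki => hi (hki ▸ hc), hkj, rfl⟩
  obtain ⟨k, hik, hkj, -⟩ := mem_shift _ hQ.choose_spec
  exact hnot ⟨by omega, by omega, hjn, mem_shift⟩

theorem List.countP_le_succ (l : List ℕ) (k : ℕ) :
    l.countP (· ≤ k + 1) = l.countP (· ≤ k) + l.count (k + 1) := by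
  induction l with
  | nil => rfl
  | cons a l ih =>
    simp only [List.countP_cons, List.count_cons, ih, decide_eq_true_eq, beq_iff_eq]
    split_ifs <;> omega

section Gadgets

variable {α : Type*} {A B D : α} {u v : ℕ} {vs : List ℕ}

theorem Gadget.length_eq (hv : 2 ≤ v) : (Gadget A B D u v).length = v + u := by
  simp only [Gadget, List.length_cons, List.length_append, List.length_replicate]
  omega

theorem Gadget.getD_eq (hv : 2 ≤ v) (k : ℕ) :
    (Gadget A B D u v).getD k D = if k = 0 then A else if k = v - 1 then B else D := by
  simp only [Gadget, List.getD_eq_getElem?_getD, List.getElem?_cons, List.getElem?_append,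
    List.getElem?_replicate, List.length_replicate]
  split_ifs <;> first | omega | simp_all

/-- The list of pairs `(s, v)`, one per gadget `G_v` of `gadgetConcat A B D u vs`, where `s` is
the 0-indexed position at which that gadget starts. -/
def gadgetStarts (u : ℕ) : List ℕ → List (ℕ × ℕ)
  | [] => []
  | v :: vs => (0, v) :: (gadgetStarts u vs).map fun p => (p.1 + (v + u), p.2)

def gadgetConcat (A B D : α) (u : ℕ) (vs : List ℕ) : List α :=
  (vs.map (Gadget A B D u)).flatten

theorem gadgetConcat_cons :
    gadgetConcat A B D u (v :: vs) = Gadget A B D u v ++ gadgetConcat A B D u vs := rfl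

theorem map_snd_gadgetStarts (u : ℕ) (vs : List ℕ) : (gadgetStarts u vs).map Prod.snd = vs := by
  induction vs with
  | nil => rfl
  | cons v vs ih => simp [gadgetStarts, List.map_map, Function.comp_def, ih]

theorem le_snd_of_mem_gadgetStarts (h2 : ∀ v ∈ vs, 2 ≤ v) {p : ℕ × ℕ}
    (hp : p ∈ gadgetStarts u vs) : 2 ≤ p.2 :=
  h2 _ (map_snd_gadgetStarts u vs ▸ List.mem_map_of_mem hp)

theorem pairwise_gadgetStarts (u : ℕ) (vs : List ℕ) :
    (gadgetStarts u vs).Pairwise fun p q => p.1 + p.2 + u ≤ q.1 := by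
  induction vs with
  | nil => exact List.Pairwise.nil
  | cons v vs ih =>
    simp only [gadgetStarts, List.pairwise_cons, List.pairwise_map, List.mem_map]
    refine ⟨?_, ih.imp fun h => by omega⟩
    rintro _ ⟨q, -, rfl⟩
    omega

theorem gadgetStarts_disjoint {p q : ℕ × ℕ} (hp : p ∈ gadgetStarts u vs)
    (hq : q ∈ gadgetStarts u vs) : p = q ∨ p.1 + p.2 + u ≤ q.1 ∨ q.1 + q.2 + u ≤ p.1 := by
  let Apart (p q : ℕ × ℕ) : Prop := p.1 + p.2 + u ≤ q.1 ∨ q.1 + q.2 + u ≤ p.1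
  have : Std.Symm Apart := ⟨fun _ _ => Or.symm⟩
  refine or_iff_not_imp_left.2 fun hpq => ?_
  exact ((pairwise_gadgetStarts u vs).imp (S := Apart) Or.inl).forall hp hq hpq

theorem nodup_gadgetStarts (h2 : ∀ v ∈ vs, 2 ≤ v) : (gadgetStarts u vs).Nodup :=
  (pairwise_gadgetStarts u vs).imp_of_mem fun hp _ h heq => by
    have := le_snd_of_mem_gadgetStarts h2 hp
    subst heq
    omega

theorem add_le_length_of_mem_gadgetStarts (h2 : ∀ v ∈ vs, 2 ≤ v) {p : ℕ × ℕ}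
    (hp : p ∈ gadgetStarts u vs) : p.1 + p.2 + u ≤ (gadgetConcat A B D u vs).length := by
  induction vs generalizing p with
  | nil => simp [gadgetStarts] at hp
  | cons v vs ih =>
    have hv := h2 v List.mem_cons_self
    rw [gadgetConcat_cons, List.length_append, Gadget.length_eq hv]
    simp only [gadgetStarts, List.mem_cons, List.mem_map] at hp
    rcases hp with rfl | ⟨q, hq, rfl⟩
    · omega
    · have := ih (fun w hw => h2 w (List.mem_cons_of_mem _ hw)) hq
      dsimp only
      omega

theorem getD_gadgetConcat_add (h2 : ∀ v ∈ vs, 2 ≤ v) {p : ℕ × ℕ}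
    (hp : p ∈ gadgetStarts u vs) {k : ℕ} (hk : k < p.2 + u) :
    (gadgetConcat A B D u vs).getD (p.1 + k) D = (Gadget A B D u p.2).getD k D := by
  induction vs generalizing p with
  | nil => simp [gadgetStarts] at hp
  | cons v vs ih =>
    have hv := h2 v List.mem_cons_self
    rw [gadgetConcat_cons]
    simp only [gadgetStarts, List.mem_cons, List.mem_map] at hp
    rcases hp with rfl | ⟨q, hq, rfl⟩
    · rw [List.getD_append _ _ _ _ (by rw [Gadget.length_eq hv]; omega), zero_add]
    · rw [List.getD_append_right _ _ _ _ (by rw [Gadget.length_eq hv]; omega),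
        Gadget.length_eq hv, show q.1 + (v + u) + k - (v + u) = q.1 + k by omega]
      exact ih (fun w hw => h2 w (List.mem_cons_of_mem _ hw)) hq hk

theorem exists_mem_gadgetStarts_of_lt_length (h2 : ∀ v ∈ vs, 2 ≤ v) {k : ℕ}
    (hk : k < (gadgetConcat A B D u vs).length) :
    ∃ p ∈ gadgetStarts u vs, p.1 ≤ k ∧ k < p.1 + p.2 + u := by
  induction vs generalizing k with
  | nil => simp [gadgetConcat] at hk
  | cons v vs ih =>
    have hv := h2 v List.mem_cons_self
    rw [gadgetConcat_cons, List.length_append, Gadget.length_eq hv] at hk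
    by_cases hkv : k < v + u
    · exact ⟨(0, v), List.mem_cons_self, Nat.zero_le k, by omega⟩
    · obtain ⟨q, hq, hqk, hkq⟩ :=
        ih (fun w hw => h2 w (List.mem_cons_of_mem _ hw)) (k := k - (v + u)) (by omega)
      exact ⟨(q.1 + (v + u), q.2), List.mem_cons_of_mem _ (List.mem_map_of_mem hq),
        by dsimp only; omega, by dsimp only; omega⟩

theorem exists_mem_gadgetStarts_of_getD_ne (h2 : ∀ v ∈ vs, 2 ≤ v) {k : ℕ}
    (hk : (gadgetConcat A B D u vs).getD k D ≠ D) :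
    ∃ p ∈ gadgetStarts u vs, p.1 ≤ k ∧
      (gadgetConcat A B D u vs).getD k D = (Gadget A B D u p.2).getD (k - p.1) D := by
  have hlen : k < (gadgetConcat A B D u vs).length :=
    not_le.1 fun h => hk (List.getD_eq_default _ _ h)
  obtain ⟨p, hp, hpk, hkp⟩ := exists_mem_gadgetStarts_of_lt_length h2 hlen
  refine ⟨p, hp, hpk, ?_⟩
  rw [← getD_gadgetConcat_add h2 hp (by omega), Nat.add_sub_cancel' hpk]

theorem getD_gadgetConcat_eq_A_iff (hAB : A ≠ B) (hAD : A ≠ D) (h2 : ∀ v ∈ vs, 2 ≤ v)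
    (k : ℕ) : (gadgetConcat A B D u vs).getD k D = A ↔ ∃ p ∈ gadgetStarts u vs, k = p.1 := by
  constructor
  · intro hk
    obtain ⟨p, hp, hpk, hget⟩ :=
      exists_mem_gadgetStarts_of_getD_ne h2 fun h => hAD (hk.symm.trans h)
    rw [hk, Gadget.getD_eq (le_snd_of_mem_gadgetStarts h2 hp)] at hget
    split_ifs at hget
    · exact ⟨p, hp, by omega⟩
    · exact absurd hget hAB
    · exact absurd hget hAD
  · rintro ⟨p, hp, rfl⟩
    have hv := le_snd_of_mem_gadgetStarts h2 hp
    rw [← add_zero p.1, getD_gadgetConcat_add h2 hp (by omega), Gadget.getD_eq hv, if_pos rfl]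

theorem getD_gadgetConcat_eq_B_iff (hAB : A ≠ B) (hBD : B ≠ D) (h2 : ∀ v ∈ vs, 2 ≤ v)
    (k : ℕ) :
    (gadgetConcat A B D u vs).getD k D = B ↔ ∃ p ∈ gadgetStarts u vs, k + 1 = p.1 + p.2 := by
  constructor
  · intro hk
    obtain ⟨p, hp, hpk, hget⟩ :=
      exists_mem_gadgetStarts_of_getD_ne h2 fun h => hBD (hk.symm.trans h)
    have hv := le_snd_of_mem_gadgetStarts h2 hp
    rw [hk, Gadget.getD_eq hv] at hget
    split_ifs at hget
    · exact absurd hget.symm hAB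
    · exact ⟨p, hp, by omega⟩
    · exact absurd hget hBD
  · rintro ⟨p, hp, hkp⟩
    have hv := le_snd_of_mem_gadgetStarts h2 hp
    rw [show k = p.1 + (p.2 - 1) by omega, getD_gadgetConcat_add h2 hp (by omega),
      Gadget.getD_eq hv, if_neg (by omega), if_pos rfl]

variable [DecidableEq α]

theorem leftMinCooc_gadgetConcat_iff (hAB : A ≠ B) (hAD : A ≠ D) (hBD : B ≠ D)
    (h2 : ∀ v ∈ vs, 2 ≤ v) {w : ℕ} (hwu : w ≤ u) (i j : ℕ) :
    LeftMinCooc (gadgetConcat A B D u vs).length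
        (fun k => (gadgetConcat A B D u vs).getD (k - 1) D) {A, B} i j ∧ j - i + 1 = w ↔
      ∃ p ∈ gadgetStarts u vs, p.2 ≤ w ∧ i = p.1 + 1 ∧ j = p.1 + w := by
  have isA := getD_gadgetConcat_eq_A_iff (u := u) hAB hAD h2
  have isB := getD_gadgetConcat_eq_B_iff (u := u) hAB hBD h2
  constructor
  · rintro ⟨hlm, hw⟩
    have hiAB := hlm.apply_left_mem ⟨A, by simp⟩
    obtain ⟨⟨hi1, hij, hjn, hall⟩, -⟩ := hlm
    obtain ⟨kA, hikA, hkAj, hkA⟩ := hall A (by simp)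
    obtain ⟨kB, hikB, hkBj, hkB⟩ := hall B (by simp)
    obtain ⟨p, hp, hpA⟩ := (isA _).1 hkA
    obtain ⟨q, hq, hqB⟩ := (isB _).1 hkB
    have hqv := le_snd_of_mem_gadgetStarts h2 hq
    rcases Finset.mem_insert.1 hiAB with hiA | hiB
    · obtain ⟨r, hr, hri⟩ := (isA _).1 hiA
      rcases gadgetStarts_disjoint hq hr with rfl | h | h
      · exact ⟨q, hq, by omega, by omega, by omega⟩
      all_goals omega
    -- the `A` of the window would lie in a later gadget, more than `u` positions after `i`
    · obtain ⟨r, hr, hri⟩ := (isB _).1 (Finset.mem_singleton.1 hiB)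
      have hrv := le_snd_of_mem_gadgetStarts h2 hr
      have hkAi : kA ≠ i := by
        rintro rfl
        exact hAB (hkA.symm.trans (Finset.mem_singleton.1 hiB))
      rcases gadgetStarts_disjoint hp hr with rfl | h | h <;> omega
  · rintro ⟨p, hp, hpw, rfl, rfl⟩
    have hpv := le_snd_of_mem_gadgetStarts h2 hp
    have hlen := add_le_length_of_mem_gadgetStarts (A := A) (B := B) (D := D) h2 hp
    refine ⟨⟨⟨by omega, by omega, by omega, ?_⟩, ?_⟩, by omega⟩
    · intro c hc
      rcases Finset.mem_insert.1 hc with rfl | hc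
      · exact ⟨p.1 + 1, le_rfl, by omega, (isA _).2 ⟨p, hp, rfl⟩⟩
      · rw [Finset.mem_singleton.1 hc]
        exact ⟨p.1 + p.2, by omega, by omega, (isB _).2 ⟨p, hp, by omega⟩⟩
    · rintro ⟨-, -, -, hall⟩
      obtain ⟨k, hk1, hk2, hkA⟩ := hall A (by simp)
      obtain ⟨r, hr, hrk⟩ := (isA _).1 hkA
      rcases gadgetStarts_disjoint hp hr with rfl | h | h <;> omega

theorem lmco_gadgetConcat (hAB : A ≠ B) (hAD : A ≠ D) (hBD : B ≠ D)
    (h2 : ∀ v ∈ vs, 2 ≤ v) {w : ℕ} (hwu : w ≤ u) :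
    lmco (gadgetConcat A B D u vs).length (fun k => (gadgetConcat A B D u vs).getD (k - 1) D)
      {A, B} w = vs.countP (· ≤ w) := by
  set G := (gadgetStarts u vs).filter (·.2 ≤ w)
  have hset : {p : ℕ × ℕ | LeftMinCooc (gadgetConcat A B D u vs).length
        (fun k => (gadgetConcat A B D u vs).getD (k - 1) D) {A, B} p.1 p.2 ∧ p.2 - p.1 + 1 = w}
      = (fun p : ℕ × ℕ => (p.1 + 1, p.1 + w)) '' (G.toFinset : Set (ℕ × ℕ)) := by
    ext ⟨i, j⟩
    simp only [Set.mem_ofPred_eq, leftMinCooc_gadgetConcat_iff hAB hAD hBD h2 hwu, Set.mem_image,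
      Finset.mem_coe, List.mem_toFinset, G, List.mem_filter, decide_eq_true_eq, Prod.mk.injEq]
    grind
  have hinj : Set.InjOn (fun p : ℕ × ℕ => (p.1 + 1, p.1 + w)) (G.toFinset : Set (ℕ × ℕ)) := by
    intro p hp q hq hpq
    simp only [Finset.mem_coe, List.mem_toFinset, G, List.mem_filter] at hp hq
    have hpv := le_snd_of_mem_gadgetStarts h2 hp.1
    have hqv := le_snd_of_mem_gadgetStarts h2 hq.1
    simp only [Prod.mk.injEq] at hpq
    rcases gadgetStarts_disjoint hp.1 hq.1 with h | h | h <;> first | exact h | omega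
  rw [lmco, hset, hinj.ncard_image, Set.ncard_coe_finset,
    List.toFinset_card_of_nodup ((nodup_gadgetStarts h2).filter _), ← List.countP_eq_length_filter]
  conv_rhs => rw [← map_snd_gadgetStarts u vs, List.countP_map]
  rfl

theorem dlt_gadgetConcat (hAB : A ≠ B) (hAD : A ≠ D) (hBD : B ≠ D)
    (h2 : ∀ v ∈ vs, 2 ≤ v) {i : ℕ} (hi : 1 ≤ i) (hiu : i ≤ u) :
    dlt (gadgetConcat A B D u vs).length (fun k => (gadgetConcat A B D u vs).getD (k - 1) D)
      {A, B} i = vs.count i := by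
  obtain ⟨k, rfl⟩ : ∃ k, i = k + 1 := ⟨i - 1, by omega⟩
  rw [dlt, lmco_gadgetConcat hAB hAD hBD h2 hiu, lmco_gadgetConcat hAB hAD hBD h2 (by omega),
    Nat.add_sub_cancel, List.countP_le_succ]
  push_cast
  ring

end Gadgets

def gadgetParams (m : ℕ) (e c : ℕ → ℕ) : List ℕ :=
  ((List.range m).map fun j => List.replicate (c (j + 1)) (e (j + 1))).flatten

theorem gadgetString_eq_gadgetConcat {α : Type*} (A B D : α) (u m : ℕ) (e c : ℕ → ℕ) :
    GadgetString A B D u m e c = gadgetConcat A B D u (gadgetParams m e c) := by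
  simp [GadgetString, gadgetConcat, gadgetParams, List.map_flatten, List.flatten_flatten,
    List.map_map, List.map_replicate, Function.comp_def]

theorem count_gadgetParams (m : ℕ) (e c : ℕ → ℕ) (i : ℕ) :
    (gadgetParams m e c).count i = ∑ j ∈ Finset.Icc 1 m, if e j = i then c j else 0 := by
  rw [← Finset.Ico_add_one_right_eq_Icc, Finset.sum_Ico_eq_sum_range, Nat.add_sub_cancel]
  simp only [gadgetParams, List.count_flatten, List.map_map, Function.comp_def,
    List.count_replicate, beq_iff_eq, add_comm 1]
  rfl

theorem mem_gadgetParams {m : ℕ} {e c : ℕ → ℕ} {v : ℕ} (hv : v ∈ gadgetParams m e c) :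
    ∃ j ∈ Finset.Icc 1 m, e j = v := by
  simp only [gadgetParams, List.mem_flatten, List.mem_map, List.mem_range] at hv
  obtain ⟨_, ⟨j, hj, rfl⟩, hv⟩ := hv
  exact ⟨j + 1, Finset.mem_Icc.2 ⟨by omega, by omega⟩, (List.eq_of_mem_replicate hv).symm⟩

theorem stmt16_general {α : Type*} [DecidableEq α] (A B D : α)
    (hAB : A ≠ B) (hAD : A ≠ D) (hBD : B ≠ D)
    (u m : ℕ) (e c : ℕ → ℕ)
    (he : ∀ j ∈ Finset.Icc 1 m, e j ∈ Finset.Icc 2 u)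
    (hmono : ∀ i ∈ Finset.Icc 1 m, ∀ j ∈ Finset.Icc 1 m, i < j → e i < e j) :
    (∀ j ∈ Finset.Icc 1 m,
        dlt (GadgetString A B D u m e c).length
          (fun k => (GadgetString A B D u m e c).getD (k-1) D) ({A, B} : Finset α)
          (e j) = c j) ∧
    (∀ i ∈ Finset.Icc 2 u, (∀ j ∈ Finset.Icc 1 m, e j ≠ i) →
        dlt (GadgetString A B D u m e c).length
          (fun k => (GadgetString A B D u m e c).getD (k-1) D) ({A, B} : Finset α)
          i = 0) := by
  have h2 : ∀ v ∈ gadgetParams m e c, 2 ≤ v := fun v hv => by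
    obtain ⟨j, hj, rfl⟩ := mem_gadgetParams hv
    exact (Finset.mem_Icc.1 (he j hj)).1
  have hdlt : ∀ i ∈ Finset.Icc 2 u, dlt (GadgetString A B D u m e c).length
      (fun k => (GadgetString A B D u m e c).getD (k-1) D) ({A, B} : Finset α) i =
      ((∑ j ∈ Finset.Icc 1 m, if e j = i then c j else 0 : ℕ) : ℤ) := by
    intro i hi
    rw [Finset.mem_Icc] at hi
    rw [gadgetString_eq_gadgetConcat, dlt_gadgetConcat hAB hAD hBD h2 (by omega) hi.2,
      count_gadgetParams]
  have hinj : Set.InjOn e (Finset.Icc 1 m) := StrictMonoOn.injOn hmono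
  refine ⟨fun j hj => ?_, fun i hi hne => ?_⟩
  · rw [hdlt _ (he j hj), Finset.sum_eq_single_of_mem j hj fun k hk hkj =>
      if_neg fun hek => hkj (hinj hk hj hek), if_pos rfl]
  · rw [hdlt i hi, Finset.sum_eq_zero fun j hj => if_neg (hne j hj), Nat.cast_zero]

theorem stmt16 {α : Type*} [DecidableEq α] (A B D : α)
    (hAB : A ≠ B) (hAD : A ≠ D) (hBD : B ≠ D)
    (u m : ℕ) (hu : 2 ≤ u) (hm : 1 ≤ m) (e c : ℕ → ℕ)
    (he : ∀ j ∈ Finset.Icc 1 m, e j ∈ Finset.Icc 2 u)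
    (hmono : ∀ i ∈ Finset.Icc 1 m, ∀ j ∈ Finset.Icc 1 m, i < j → e i < e j)
    (hc : ∀ j ∈ Finset.Icc 1 m, 0 < c j) :
    (∀ j ∈ Finset.Icc 1 m,
        dlt (GadgetString A B D u m e c).length
          (fun k => (GadgetString A B D u m e c).getD (k-1) D) ({A, B} : Finset α)
          (e j) = c j) ∧
    (∀ i ∈ Finset.Icc 2 u, (∀ j ∈ Finset.Icc 1 m, e j ≠ i) →
        dlt (GadgetString A B D u m e c).length
          (fun k => (GadgetString A B D u m e c).getD (k-1) D) ({A, B} : Finset α)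
          i = 0) :=
  stmt16_general A B D hAB hAD hBD u m e c he hmono
end
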